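/- arXiv:1403.5419 — 9 statements merged into one kernel-verified Lean document; each statement's English description precedes it below -/
import Mathlib

section
/- For the Keller–Segel-type diffusion matrix A(u) = ((1−u1, −u1), (−u2, 1−u2)) and the Hessian H(u) of the logarithmic entropy h(u) = u1(log u1 −1) + u2(log u2 −1) + u3(log u3 −1) with u3 = 1−u1−u2, the product H(u)·A(u) equals the diagonal matrix diag(1/u1, 1/u2) for every u in D = {(u1,u2) ∈ (0,1)² : u1+u2 < 1}; in particular H(u)A(u) is symmetric positive definite on D. -/
open Matrix

/-- For the Keller–Segel-type matrix `A(u)` and the Hessian `H(u)` of the logarithmic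
entropy, `H(u) * A(u) = diag(1/u1, 1/u2)` on the triangle `D`; in particular
`H(u) A(u)` is symmetric positive definite there. -/
theorem stmt4 (u1 u2 : ℝ) (h1 : 0 < u1) (h2 : 0 < u2) (h3 : u1 + u2 < 1)
    (H A : Matrix (Fin 2) (Fin 2) ℝ)
    (hH : H = !![1 / u1 + 1 / (1 - u1 - u2), 1 / (1 - u1 - u2);
                 1 / (1 - u1 - u2), 1 / u2 + 1 / (1 - u1 - u2)])
    (hA : A = !![1 - u1, -u1; -u2, 1 - u2]) :
    H * A = !![1 / u1, 0; 0, 1 / u2] ∧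
    (H * A).IsSymm ∧
    ∀ z : Fin 2 → ℝ, z ≠ 0 → 0 < z ⬝ᵥ ((H * A) *ᵥ z) := by
  have h3' : (0:ℝ) < 1 - u1 - u2 := by linarith
  have key : H * A = !![1 / u1, 0; 0, 1 / u2] := by
    subst hH hA
    ext i j
    fin_cases i <;> fin_cases j <;>
      simp [Matrix.mul_apply, Fin.sum_univ_succ] <;>
      field_simp <;> ring
  refine ⟨key, ?_, ?_⟩
  · rw [key, Matrix.IsSymm]
    ext i j
    fin_cases i <;> fin_cases j <;> simp
  · intro z hz
    rw [key]
    have hne : z 0 ≠ 0 ∨ z 1 ≠ 0 := by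
      by_contra h
      push_neg at h
      apply hz
      ext i
      fin_cases i <;> simp [h.1, h.2]
    have e : z ⬝ᵥ (!![1 / u1, 0; 0, 1 / u2] *ᵥ z)
        = (z 0)^2 / u1 + (z 1)^2 / u2 := by
      simp [dotProduct, Matrix.mulVec, Fin.sum_univ_succ]
      ring
    rw [e]
    rcases hne with h | h
    · have : 0 < (z 0)^2 / u1 := div_pos (by positivity) h1
      have : 0 ≤ (z 1)^2 / u2 := div_nonneg (by positivity) h2.le
      linarith
    · have : 0 < (z 1)^2 / u2 := div_pos (by positivity) h2
      have : 0 ≤ (z 0)^2 / u1 := div_nonneg (by positivity) h1.le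
      linarith
end

section
/- For the two-species volume-filling model of Burger et al. with diffusion matrix A(u) = ((D1(1−u2), D1 u1), (D2 u2, D2(1−u1))) with constants D2 ≥ D1 > 0, and H(u) the Hessian of the logarithmic entropy on the triangle D, one has for all z ∈ ℝ² and u ∈ D (with ρ = u1 + u2): zᵀ H(u) A(u) z = D1(1−ρ)(z1²/u1 + z2²/u2) + D1 ((2−ρ)/(1−ρ))(z1+z2)² + (D2−D1)(u2/(1−ρ))(z1 + ((1−u1)/u2) z2)². In particular H(u)A(u) is positive semi-definite on D. -/
/-! Clearing the denominators `u1`, `u2`, `1 - ρ` turns the identity into a polynomial one.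
On the triangle each of its three terms is a square times a nonnegative weight, the last
weight being nonnegative because `D2 ≥ D1`. -/

open Matrix

namespace VolumeFilling

noncomputable def entropyHessian (u1 u2 : ℝ) : Matrix (Fin 2) (Fin 2) ℝ :=
  !![1 / u1 + 1 / (1 - u1 - u2), 1 / (1 - u1 - u2);
     1 / (1 - u1 - u2), 1 / u2 + 1 / (1 - u1 - u2)]

def diffusionMatrix (D1 D2 u1 u2 : ℝ) : Matrix (Fin 2) (Fin 2) ℝ :=
  !![D1 * (1 - u2), D1 * u1; D2 * u2, D2 * (1 - u1)]

theorem _root_.Matrix.dotProduct_mulVec_fin_two {R : Type*} [CommSemiring R]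
    (M : Matrix (Fin 2) (Fin 2) R) (z : Fin 2 → R) :
    z ⬝ᵥ (M *ᵥ z) = M 0 0 * z 0 ^ 2 + (M 0 1 + M 1 0) * z 0 * z 1 + M 1 1 * z 1 ^ 2 := by
  rw [mulVec_fin_two, vec2_dotProduct]
  simp only [cons_val_zero, cons_val_one]
  ring

variable {D1 D2 u1 u2 : ℝ}

theorem dotProduct_entropyHessian_mul_diffusionMatrix_mulVec
    (h1 : u1 ≠ 0) (h2 : u2 ≠ 0) (h3 : u1 + u2 ≠ 1) (z : Fin 2 → ℝ) :
    z ⬝ᵥ ((entropyHessian u1 u2 * diffusionMatrix D1 D2 u1 u2) *ᵥ z)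
      = D1 * (1 - (u1 + u2)) * (z 0 ^ 2 / u1 + z 1 ^ 2 / u2)
        + D1 * ((2 - (u1 + u2)) / (1 - (u1 + u2))) * (z 0 + z 1) ^ 2
        + (D2 - D1) * (u2 / (1 - (u1 + u2))) * (z 0 + ((1 - u1) / u2) * z 1) ^ 2 := by
  have h3' : 1 - (u1 + u2) ≠ 0 := sub_ne_zero.mpr h3.symm
  have h3'' : 1 - u1 - u2 ≠ 0 := by rwa [sub_sub]
  rw [dotProduct_mulVec_fin_two]
  simp only [entropyHessian, diffusionMatrix, mul_fin_two, of_apply, cons_val', cons_val_zero,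
    cons_val_one, empty_val', cons_val_fin_one]
  field_simp
  ring

theorem dotProduct_entropyHessian_mul_diffusionMatrix_mulVec_nonneg
    (hD1 : 0 ≤ D1) (hD12 : D1 ≤ D2) (h1 : 0 < u1) (h2 : 0 < u2) (h3 : u1 + u2 < 1)
    (z : Fin 2 → ℝ) :
    0 ≤ z ⬝ᵥ ((entropyHessian u1 u2 * diffusionMatrix D1 D2 u1 u2) *ᵥ z) := by
  have hρ : 0 < 1 - (u1 + u2) := sub_pos.mpr h3
  rw [dotProduct_entropyHessian_mul_diffusionMatrix_mulVec h1.ne' h2.ne' h3.ne]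
  refine add_nonneg (add_nonneg ?_ ?_) ?_
  · exact mul_nonneg (mul_nonneg hD1 hρ.le) (by positivity)
  · exact mul_nonneg (mul_nonneg hD1 (div_nonneg (by linarith) hρ.le)) (sq_nonneg _)
  · exact mul_nonneg (mul_nonneg (sub_nonneg.mpr hD12) (div_nonneg h2.le hρ.le)) (sq_nonneg _)

end VolumeFilling

open VolumeFilling in
/-- Two-species volume-filling model of Burger et al.: identity for the quadratic
form of `H(u) A(u)` and positive semi-definiteness on the triangle `D`. -/
theorem stmt7 (D1 D2 : ℝ) (hD1 : 0 < D1) (hD12 : D1 ≤ D2)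
    (u1 u2 : ℝ) (h1 : 0 < u1) (h2 : 0 < u2) (h3 : u1 + u2 < 1)
    (H A : Matrix (Fin 2) (Fin 2) ℝ)
    (hH : H = !![1 / u1 + 1 / (1 - u1 - u2), 1 / (1 - u1 - u2);
                 1 / (1 - u1 - u2), 1 / u2 + 1 / (1 - u1 - u2)])
    (hA : A = !![D1 * (1 - u2), D1 * u1; D2 * u2, D2 * (1 - u1)]) :
    (∀ z1 z2 : ℝ,
      ![z1, z2] ⬝ᵥ ((H * A) *ᵥ ![z1, z2])
        = D1 * (1 - (u1 + u2)) * (z1 ^ 2 / u1 + z2 ^ 2 / u2)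
          + D1 * ((2 - (u1 + u2)) / (1 - (u1 + u2))) * (z1 + z2) ^ 2
          + (D2 - D1) * (u2 / (1 - (u1 + u2))) * (z1 + ((1 - u1) / u2) * z2) ^ 2) ∧
    ∀ z : Fin 2 → ℝ, 0 ≤ z ⬝ᵥ ((H * A) *ᵥ z) := by
  subst hH hA
  exact ⟨fun z1 z2 => dotProduct_entropyHessian_mul_diffusionMatrix_mulVec h1.ne' h2.ne' h3.ne _,
    dotProduct_entropyHessian_mul_diffusionMatrix_mulVec_nonneg hD1.le hD12 h1 h2 h3⟩
end

section
/- For the semiconductor model with diffusion matrix A(u) = (1/(1+μ2 u1 + μ1 u2)) · ((μ1(1+μ2 u1), μ1 μ2 u1), (μ1 μ2 u2, μ2(1+μ1 u2))) with μ1, μ2 > 0, and H(u) = diag(1/u1, 1/u2) the Hessian of h(u) = u1(log u1 −1) + u2(log u2 −1) on (0,∞)², one has for all z ∈ ℝ² and u ∈ (0,∞)²: zᵀ H(u) A(u) z = (1/(1+μ2 u1+μ1 u2)) · ((μ1/u1) z1² + (μ2/u2) z2² + μ1 μ2 (z1+z2)²). In particular H(u)A(u) is positive definite. -/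
open Matrix

/-- Semiconductor model with electron-hole scattering: identity for the quadratic
form of `H(u) A(u)` on `(0,∞)²` and positive definiteness. -/
theorem stmt8 (μ1 μ2 : ℝ) (hμ1 : 0 < μ1) (hμ2 : 0 < μ2)
    (u1 u2 : ℝ) (h1 : 0 < u1) (h2 : 0 < u2)
    (H A : Matrix (Fin 2) (Fin 2) ℝ)
    (hH : H = !![1 / u1, 0; 0, 1 / u2])
    (hA : A = (1 / (1 + μ2 * u1 + μ1 * u2)) •
        !![μ1 * (1 + μ2 * u1), μ1 * μ2 * u1; μ1 * μ2 * u2, μ2 * (1 + μ1 * u2)]) :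
    (∀ z1 z2 : ℝ,
      ![z1, z2] ⬝ᵥ ((H * A) *ᵥ ![z1, z2])
        = (1 / (1 + μ2 * u1 + μ1 * u2)) *
          ((μ1 / u1) * z1 ^ 2 + (μ2 / u2) * z2 ^ 2 + μ1 * μ2 * (z1 + z2) ^ 2)) ∧
    ∀ z : Fin 2 → ℝ, z ≠ 0 → 0 < z ⬝ᵥ ((H * A) *ᵥ z) := by
  have hd : 0 < 1 + μ2 * u1 + μ1 * u2 := by positivity
  have key : ∀ z1 z2 : ℝ,
      ![z1, z2] ⬝ᵥ ((H * A) *ᵥ ![z1, z2])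
        = (1 / (1 + μ2 * u1 + μ1 * u2)) *
          ((μ1 / u1) * z1 ^ 2 + (μ2 / u2) * z2 ^ 2 + μ1 * μ2 * (z1 + z2) ^ 2) := by
    intro z1 z2
    subst hH hA
    simp [Matrix.mul_fin_two, Matrix.mulVec, dotProduct,
      Fin.sum_univ_two, Matrix.smul_apply]
    field_simp
    ring
  refine ⟨key, fun z hz => ?_⟩
  have hz' : z = ![z 0, z 1] := by
    funext i; fin_cases i <;> rfl
  rw [hz', key]
  have hne : z 0 ≠ 0 ∨ z 1 ≠ 0 := by
    by_contra h
    push_neg at h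
    exact hz (by rw [hz', h.1, h.2]; funext i; fin_cases i <;> rfl)
  have hpos : 0 < (μ1 / u1) * (z 0) ^ 2 + (μ2 / u2) * (z 1) ^ 2
      + μ1 * μ2 * (z 0 + z 1) ^ 2 := by
    rcases hne with h | h
    · have : 0 < (μ1 / u1) * (z 0) ^ 2 := by positivity
      have h2' : 0 ≤ (μ2 / u2) * (z 1) ^ 2 := by positivity
      have h3' : 0 ≤ μ1 * μ2 * (z 0 + z 1) ^ 2 := by positivity
      linarith
    · have : 0 < (μ2 / u2) * (z 1) ^ 2 := by positivity
      have h2' : 0 ≤ (μ1 / u1) * (z 0) ^ 2 := by positivity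
      have h3' : 0 ≤ μ1 * μ2 * (z 0 + z 1) ^ 2 := by positivity
      linarith
  positivity
end

section
/- Let q : [0,1] → ℝ be continuous, nondecreasing, positive on (0,1), with q(0) = 0, and let w1, w2 ∈ ℝ. Then the function g(y) = (e^{w1} + e^{w2}) q(1 − y) has a unique fixed point y0 in (0,1), and setting u_i = e^{w_i} q(1 − y0) for i = 1, 2, the pair u = (u1, u2) lies in D = {(u1,u2) ∈ (0,1)² : u1 + u2 < 1} and satisfies u1 + u2 = y0 and w_i = log(u_i / q(1 − u1 − u2)) for i = 1, 2. -/
open Real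

/-- Invertibility of `Dh` for the volume-filling entropy: `g(y) = (e^{w1}+e^{w2}) q(1-y)`
has a unique fixed point `y0 ∈ (0,1)`, and `u_i = e^{w_i} q(1-y0)` defines a point of the
triangle `D` with `u1+u2 = y0` and `w_i = log(u_i / q(1-u1-u2))`. -/
theorem stmt10 (q : ℝ → ℝ) (hq_cont : ContinuousOn q (Set.Icc 0 1))
    (hq_mono : MonotoneOn q (Set.Icc 0 1)) (hq0 : q 0 = 0)
    (hq_pos : ∀ y ∈ Set.Ioo (0 : ℝ) 1, 0 < q y)
    (w1 w2 : ℝ) (g : ℝ → ℝ)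
    (hg : g = fun y => (Real.exp w1 + Real.exp w2) * q (1 - y)) :
    (∃! y0, y0 ∈ Set.Ioo (0 : ℝ) 1 ∧ g y0 = y0) ∧
    ∀ y0 ∈ Set.Ioo (0 : ℝ) 1, g y0 = y0 →
      0 < Real.exp w1 * q (1 - y0) ∧ 0 < Real.exp w2 * q (1 - y0) ∧
      Real.exp w1 * q (1 - y0) + Real.exp w2 * q (1 - y0) < 1 ∧
      Real.exp w1 * q (1 - y0) + Real.exp w2 * q (1 - y0) = y0 ∧
      w1 = Real.log (Real.exp w1 * q (1 - y0) /
        q (1 - Real.exp w1 * q (1 - y0) - Real.exp w2 * q (1 - y0))) ∧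
      w2 = Real.log (Real.exp w2 * q (1 - y0) /
        q (1 - Real.exp w1 * q (1 - y0) - Real.exp w2 * q (1 - y0))) := by
  have hc : 0 < Real.exp w1 + Real.exp w2 := by positivity
  -- antitonicity of g on [0,1]
  have hganti : ∀ a ∈ Set.Icc (0:ℝ) 1, ∀ b ∈ Set.Icc (0:ℝ) 1, a ≤ b → g b ≤ g a := by
    intro a ha b hb hab
    subst hg
    simp only
    have h1 : (1 - b) ∈ Set.Icc (0:ℝ) 1 := ⟨by linarith [hb.2], by linarith [hb.1]⟩
    have h2 : (1 - a) ∈ Set.Icc (0:ℝ) 1 := ⟨by linarith [ha.2], by linarith [ha.1]⟩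
    have := hq_mono h1 h2 (by linarith)
    nlinarith
  -- continuity of h = g - id on [0,1]
  have hgc : ContinuousOn g (Set.Icc 0 1) := by
    subst hg
    apply ContinuousOn.mul continuousOn_const
    apply hq_cont.comp (by fun_prop)
    intro x hx
    exact ⟨by linarith [hx.2], by linarith [hx.1]⟩
  have hhc : ContinuousOn (fun y => g y - y) (Set.Icc 0 1) := hgc.sub continuousOn_id
  have hq1 : 0 < q 1 := by
    have := hq_pos (1/2) (by norm_num)
    have := hq_mono (show (1/2:ℝ) ∈ Set.Icc (0:ℝ) 1 by norm_num)
      (show (1:ℝ) ∈ Set.Icc (0:ℝ) 1 by norm_num) (by norm_num)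
    linarith
  have h0 : 0 < g 0 - 0 := by subst hg; simp; positivity
  have h1 : g 1 - 1 < 0 := by subst hg; simp [hq0]
  have hiv := intermediate_value_Ioo' (by norm_num : (0:ℝ) ≤ 1) hhc
  have h0mem : (0:ℝ) ∈ Set.Ioo (g 1 - 1) (g 0 - 0) := ⟨h1, h0⟩
  obtain ⟨y0, hy0mem, hy0⟩ := hiv h0mem
  simp only at hy0
  have hfix : g y0 = y0 := by linarith
  have huniq : ∀ y, y ∈ Set.Ioo (0:ℝ) 1 ∧ g y = y → y = y0 := by
    intro y ⟨hy, hfy⟩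
    rcases lt_trichotomy y y0 with h | h | h
    · exfalso
      have := hganti y ⟨hy.1.le, hy.2.le⟩ y0 ⟨hy0mem.1.le, hy0mem.2.le⟩ h.le
      linarith
    · exact h
    · exfalso
      have := hganti y0 ⟨hy0mem.1.le, hy0mem.2.le⟩ y ⟨hy.1.le, hy.2.le⟩ h.le
      linarith
  refine ⟨⟨y0, ⟨hy0mem, hfix⟩, huniq⟩, ?_⟩
  intro y hy hfy
  have hq' : 0 < q (1 - y) := hq_pos _ ⟨by linarith [hy.2], by linarith [hy.1]⟩
  have hsum : Real.exp w1 * q (1 - y) + Real.exp w2 * q (1 - y) = y := by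
    rw [hg] at hfy; simp only at hfy; nlinarith [hfy]
  refine ⟨by positivity, by positivity, by rw [hsum]; exact hy.2, hsum, ?_, ?_⟩
  · rw [show 1 - Real.exp w1 * q (1 - y) - Real.exp w2 * q (1 - y) = 1 - y by linarith,
      mul_div_assoc, div_self hq'.ne', mul_one, Real.log_exp]
  · rw [show 1 - Real.exp w1 * q (1 - y) - Real.exp w2 * q (1 - y) = 1 - y by linarith,
      mul_div_assoc, div_self hq'.ne', mul_one, Real.log_exp]
end

section
/- Let q ∈ C¹([0,1]) be positive and nondecreasing on (0,1) with q(0) = 0 and y·q'(y) ≤ 2·q(y) for all y ∈ [0,1]. Let β ≥ 1 and consider the volume-filling diffusion matrix A(u) = ((q(u3) + u1 q'(u3), u1 q'(u3)), (β u2 q'(u3), β(q(u3) + u2 q'(u3)))) with u3 = 1 − u1 − u2, and let H(u) be the Hessian of the entropy density h(u) = u1(log u1 − 1) + u2(log u2 − 1) + ∫_{1/2}^{u3} log q(s) ds on D. Then for all u ∈ D with q(u3) > 0 and all z = (z1, z2) ∈ ℝ²: zᵀ H(u) A(u) z ≥ (q(u3)/u1) z1² + (q(u3)/u2) z2² + (q'(u3)²/q(u3))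 (z1 + z2)². -/
open Matrix Real

open Filter Topology in
private lemma deriv_nonneg_of_monotoneOn (q q' : ℝ → ℝ)
    (hderiv : ∀ y ∈ Set.Icc (0 : ℝ) 1, HasDerivAt q (q' y) y)
    (hmono : MonotoneOn q (Set.Icc 0 1))
    (u3 : ℝ) (hu0 : 0 < u3) (hu1 : u3 < 1) : 0 ≤ q' u3 := by
  have hd := hderiv u3 ⟨hu0.le, hu1.le⟩
  have ht : Filter.Tendsto (slope q u3) (𝓝[>] u3) (𝓝 (q' u3)) :=
    (hasDerivAt_iff_tendsto_slope.1 hd).mono_left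
      (nhdsWithin_mono _ (fun x hx => ne_of_gt hx))
  refine ge_of_tendsto ht ?_
  filter_upwards [Ioo_mem_nhdsGT_of_mem ⟨le_refl u3, hu1⟩] with x hx
  have hle : q u3 ≤ q x :=
    hmono ⟨hu0.le, hu1.le⟩ ⟨(hu0.trans hx.1).le, hx.2.le⟩ hx.1.le
  rw [slope_def_field]
  exact div_nonneg (sub_nonneg.2 hle) (sub_nonneg.2 hx.1.le)

private lemma quad_form_nonneg (a b c z1 z2 : ℝ) (ha : 0 ≤ a) (hc : 0 ≤ c)
    (hd : b ^ 2 ≤ a * c) : 0 ≤ a * z1 ^ 2 + 2 * b * z1 * z2 + c * z2 ^ 2 := by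
  rcases eq_or_lt_of_le ha with ha0 | ha0
  · have hb : b = 0 := by nlinarith [sq_nonneg b]
    rw [← ha0, hb]
    nlinarith [sq_nonneg z2]
  · nlinarith [sq_nonneg (a * z1 + b * z2), mul_nonneg (sub_nonneg.2 hd) (sq_nonneg z2)]

/-- Positive definiteness for the volume-filling model: for `q ∈ C¹([0,1])`
positive and nondecreasing on `(0,1)` with `q(0)=0` and `y q'(y) ≤ 2 q(y)`, and `β ≥ 1`,
`zᵀ H(u) A(u) z ≥ (q(u3)/u1) z1² + (q(u3)/u2) z2² + (q'(u3)²/q(u3)) (z1+z2)²`. -/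
theorem stmt11 (q q' : ℝ → ℝ)
    (hderiv : ∀ y ∈ Set.Icc (0 : ℝ) 1, HasDerivAt q (q' y) y)
    (hpos : ∀ y ∈ Set.Ioo (0 : ℝ) 1, 0 < q y)
    (hmono : MonotoneOn q (Set.Icc 0 1))
    (hq0 : q 0 = 0)
    (hgrowth : ∀ y ∈ Set.Icc (0 : ℝ) 1, y * q' y ≤ 2 * q y)
    (β : ℝ) (hβ : 1 ≤ β)
    (u1 u2 : ℝ) (h1 : 0 < u1) (h2 : 0 < u2) (h3 : u1 + u2 < 1)
    (hq3 : 0 < q (1 - u1 - u2))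
    (H A : Matrix (Fin 2) (Fin 2) ℝ)
    (hH : H = !![1 / u1 + q' (1 - u1 - u2) / q (1 - u1 - u2),
                 q' (1 - u1 - u2) / q (1 - u1 - u2);
                 q' (1 - u1 - u2) / q (1 - u1 - u2),
                 1 / u2 + q' (1 - u1 - u2) / q (1 - u1 - u2)])
    (hA : A = !![q (1 - u1 - u2) + u1 * q' (1 - u1 - u2), u1 * q' (1 - u1 - u2);
                 β * u2 * q' (1 - u1 - u2),
                 β * (q (1 - u1 - u2) + u2 * q' (1 - u1 - u2))]) :
    ∀ z1 z2 : ℝ,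
      (q (1 - u1 - u2) / u1) * z1 ^ 2 + (q (1 - u1 - u2) / u2) * z2 ^ 2
        + (q' (1 - u1 - u2) ^ 2 / q (1 - u1 - u2)) * (z1 + z2) ^ 2
      ≤ ![z1, z2] ⬝ᵥ ((H * A) *ᵥ ![z1, z2]) := by
  intro z1 z2
  have hu0 : 0 < 1 - u1 - u2 := by linarith
  have hu1 : 1 - u1 - u2 < 1 := by linarith
  set u3 : ℝ := 1 - u1 - u2 with hu3def
  set Q : ℝ := q u3 with hQdef
  set P : ℝ := q' u3 with hPdef
  have hP : 0 ≤ P := deriv_nonneg_of_monotoneOn q q' hderiv hmono u3 hu0 hu1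
  have hgw : u3 * P ≤ 2 * Q := hgrowth u3 ⟨hu0.le, hu1.le⟩
  -- the quadratic form coefficients of the difference (times Q*u2)
  set γ : ℝ := β - 1 with hγdef
  have hγ : 0 ≤ γ := by simp [hγdef]; linarith
  set a : ℝ := u2 * P * (2 * Q - u3 * P) + γ * u2 ^ 2 * P ^ 2 with hadef
  set b : ℝ := a + γ * P * Q * u2 with hbdef
  set c : ℝ := u2 * P * (2 * Q - u3 * P) + γ * Q ^ 2 + 2 * γ * P * Q * u2
      + γ * u2 ^ 2 * P ^ 2 with hcdef
  have hbase : 0 ≤ u2 * P * (2 * Q - u3 * P) :=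
    mul_nonneg (mul_nonneg h2.le hP) (by linarith)
  have ha : 0 ≤ a := by
    have : 0 ≤ γ * u2 ^ 2 * P ^ 2 := by positivity
    rw [hadef]; linarith
  have hc : 0 ≤ c := by
    have h4 : 0 ≤ γ * Q ^ 2 := by positivity
    have h5 : 0 ≤ 2 * γ * P * Q * u2 := by positivity
    have h6 : 0 ≤ γ * u2 ^ 2 * P ^ 2 := by positivity
    rw [hcdef]; linarith
  have hdisc : b ^ 2 ≤ a * c := by
    have key : a * c - b ^ 2 = γ * Q ^ 2 * (u2 * P * (2 * Q - u3 * P)) := by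
      rw [hadef, hbdef, hcdef]; ring
    nlinarith [mul_nonneg (mul_nonneg hγ (sq_nonneg Q)) hbase]
  have hform : 0 ≤ a * z1 ^ 2 + 2 * b * z1 * z2 + c * z2 ^ 2 :=
    quad_form_nonneg a b c z1 z2 ha hc hdisc
  have hEq : ![z1, z2] ⬝ᵥ ((H * A) *ᵥ ![z1, z2])
      - ((Q / u1) * z1 ^ 2 + (Q / u2) * z2 ^ 2 + (P ^ 2 / Q) * (z1 + z2) ^ 2)
      = (a * z1 ^ 2 + 2 * b * z1 * z2 + c * z2 ^ 2) / (Q * u2) := by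
    rw [hH, hA]
    simp only [Matrix.mul_apply, Matrix.mulVec, dotProduct, Fin.sum_univ_two,
      Matrix.cons_val', Matrix.cons_val_zero, Matrix.cons_val_one, Matrix.head_cons,
      Matrix.empty_val', Matrix.cons_val_fin_one, Matrix.head_fin_const,
      Matrix.of_apply]
    rw [hbdef, hadef, hcdef, hγdef, hu3def]
    field_simp
    ring
  have : 0 ≤ (a * z1 ^ 2 + 2 * b * z1 * z2 + c * z2 ^ 2) / (Q * u2) :=
    div_nonneg hform (by positivity)
  linarith [hEq ▸ this]
end

section
/- Let s ≥ 1 and let a11, a22 be continuous and a12, a21 be C¹ nonnegative functions on [0,∞) with a11, a22, a12', a21' ≥ 0. Assume s·a12(v) ≥ v·a12'(v), s·a21(w) ≥ w·a21'(w) for all v, w ≥ 0, and a11'(w)·a22'(v) ≥ (1 − 1/s)·a12'(v)·a21'(w) for all v, w ≥ 0. Set p1(u) = α10 + a11(u1) + a12(u2), p2(u) = α20 + a21(u1) + a22(u2) with α10, α20 > 0, let A(u) = ((p1 + u1 ∂1 p1, u1 ∂2 p1), (u2 ∂1 p2, p2 + u2 ∂2 p2)), and let H(u) = diag(a21'(u1)/u1,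 a12'(u2)/u2). Then for all u ∈ (0,∞)² and z ∈ ℝ²: zᵀ H(u) A(u) z ≥ ((α10 + a11(u1))/u1)·a21'(u1)·z1² + ((α20 + a22(u2))/u2)·a12'(u2)·z2². In particular H(u)A(u) is positive semi-definite. -/
open Matrix

lemma quadnn (α β γ x y : ℝ) (hα : 0 ≤ α) (hγ : 0 ≤ γ) (hdet : β ^ 2 ≤ α * γ) :
    0 ≤ α * x ^ 2 + γ * y ^ 2 + 2 * β * x * y := by
  rcases hα.eq_or_lt with h | h
  · have hβ0 : β = 0 := by nlinarith [sq_nonneg β]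
    rw [← h, hβ0]
    nlinarith [mul_nonneg hγ (sq_nonneg y)]
  · nlinarith [sq_nonneg (α * x + β * y), mul_nonneg (sub_nonneg.2 hdet) (sq_nonneg y)]

lemma key (s P Q A B x y : ℝ) (hs : 1 ≤ s) (hP : 0 ≤ P) (hQ : 0 ≤ Q)
    (hA : 0 ≤ A) (hB : 0 ≤ B) (hc : (s - 1) * (A * B) ≤ s * (P * Q)) :
    0 ≤ s * (P * B * x ^ 2 + Q * A * y ^ 2) + 2 * (s - 1) * A * B * x * y := by
  have hs1 : (0:ℝ) ≤ s - 1 := by linarith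
  have hβn : 0 ≤ (s - 1) * (A * B) := by positivity
  have hdet : ((s - 1) * (A * B)) ^ 2 ≤ (s * (P * B)) * (s * (Q * A)) := by
    nlinarith [mul_le_mul_of_nonneg_left hc hβn, mul_nonneg hA hB,
      mul_le_mul_of_nonneg_left hc (mul_nonneg hs1 (mul_nonneg hA hB))]
  have := quadnn (s * (P * B)) ((s - 1) * (A * B)) (s * (Q * A)) x y
    (by positivity) (by positivity) hdet
  nlinarith [this]

lemma numer (s u1 u2 a b A12 A21 P Q z1 z2 : ℝ) (hs : 1 ≤ s)
    (hu1 : 0 < u1) (hu2 : 0 < u2)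
    (hP : 0 ≤ P) (hQ : 0 ≤ Q) (hA12 : 0 ≤ A12) (hA21 : 0 ≤ A21)
    (h12 : u2 * A12 ≤ s * a) (h21 : u1 * A21 ≤ s * b)
    (hc : (s - 1) * (A12 * A21) ≤ s * (P * Q)) :
    0 ≤ A21 * u2 * a * z1 ^ 2 + P * A21 * u1 * u2 * z1 ^ 2
      + 2 * A12 * A21 * u1 * u2 * z1 * z2
      + A12 * u1 * b * z2 ^ 2 + Q * A12 * u1 * u2 * z2 ^ 2 := by
  have hs0 : (0:ℝ) < s := lt_of_lt_of_le one_pos hs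
  have hK := key s P Q A12 A21 z1 z2 hs hP hQ hA12 hA21 hc
  have h1 : 0 ≤ (s * a - u2 * A12) * A21 * u2 * z1 ^ 2 :=
    mul_nonneg (mul_nonneg (mul_nonneg (by linarith) hA21) hu2.le) (sq_nonneg z1)
  have h2 : 0 ≤ (s * b - u1 * A21) * A12 * u1 * z2 ^ 2 :=
    mul_nonneg (mul_nonneg (mul_nonneg (by linarith) hA12) hu1.le) (sq_nonneg z2)
  have h3 : 0 ≤ A12 * A21 * (u2 * z1 + u1 * z2) ^ 2 :=
    mul_nonneg (mul_nonneg hA12 hA21) (sq_nonneg _)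
  have h4 : 0 ≤ u1 * u2 * (s * (P * A21 * z1 ^ 2 + Q * A12 * z2 ^ 2)
      + 2 * (s - 1) * A12 * A21 * z1 * z2) :=
    mul_nonneg (mul_nonneg hu1.le hu2.le) hK
  have hsN : 0 ≤ s * (A21 * u2 * a * z1 ^ 2 + P * A21 * u1 * u2 * z1 ^ 2
      + 2 * A12 * A21 * u1 * u2 * z1 * z2
      + A12 * u1 * b * z2 ^ 2 + Q * A12 * u1 * u2 * z2 ^ 2) := by nlinarith [h1, h2, h3, h4]
  nlinarith [hsN, hs0]

/-- Positive semi-definiteness of `H(u) A(u)` for the population model without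
volume filling (general concave/convex transition rates). -/
theorem stmt14 (s : ℝ) (hs : 1 ≤ s)
    (α10 α20 : ℝ) (h10 : 0 < α10) (h20 : 0 < α20)
    (a11 a12 a21 a22 a11' a12' a21' a22' : ℝ → ℝ)
    (hd11 : ∀ y : ℝ, 0 ≤ y → HasDerivAt a11 (a11' y) y)
    (hd12 : ∀ y : ℝ, 0 ≤ y → HasDerivAt a12 (a12' y) y)
    (hd21 : ∀ y : ℝ, 0 ≤ y → HasDerivAt a21 (a21' y) y)
    (hd22 : ∀ y : ℝ, 0 ≤ y → HasDerivAt a22 (a22' y) y)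
    (hnn11 : ∀ y : ℝ, 0 ≤ y → 0 ≤ a11 y) (hnn22 : ∀ y : ℝ, 0 ≤ y → 0 ≤ a22 y)
    (hnn12 : ∀ y : ℝ, 0 ≤ y → 0 ≤ a12 y) (hnn21 : ∀ y : ℝ, 0 ≤ y → 0 ≤ a21 y)
    (hnn11' : ∀ y : ℝ, 0 ≤ y → 0 ≤ a11' y) (hnn22' : ∀ y : ℝ, 0 ≤ y → 0 ≤ a22' y)
    (hnn12' : ∀ y : ℝ, 0 ≤ y → 0 ≤ a12' y) (hnn21' : ∀ y : ℝ, 0 ≤ y → 0 ≤ a21' y)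
    (hs12 : ∀ v : ℝ, 0 ≤ v → v * a12' v ≤ s * a12 v)
    (hs21 : ∀ w : ℝ, 0 ≤ w → w * a21' w ≤ s * a21 w)
    (hcross : ∀ v w : ℝ, 0 ≤ v → 0 ≤ w →
      (1 - 1 / s) * a12' v * a21' w ≤ a11' w * a22' v) :
    ∀ u1 u2 : ℝ, 0 < u1 → 0 < u2 →
      (∀ z1 z2 : ℝ,
        ((α10 + a11 u1) / u1) * a21' u1 * z1 ^ 2
          + ((α20 + a22 u2) / u2) * a12' u2 * z2 ^ 2
        ≤ ![z1, z2] ⬝ᵥ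
            ((!![a21' u1 / u1, 0; 0, a12' u2 / u2] *
              !![(α10 + a11 u1 + a12 u2) + u1 * a11' u1, u1 * a12' u2;
                 u2 * a21' u1, (α20 + a21 u1 + a22 u2) + u2 * a22' u2]) *ᵥ
              ![z1, z2])) ∧
      ∀ z : Fin 2 → ℝ,
        0 ≤ z ⬝ᵥ
          ((!![a21' u1 / u1, 0; 0, a12' u2 / u2] *
            !![(α10 + a11 u1 + a12 u2) + u1 * a11' u1, u1 * a12' u2;
               u2 * a21' u1, (α20 + a21 u1 + a22 u2) + u2 * a22' u2]) *ᵥ z) := by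
  intro u1 u2 hu1 hu2
  have hs0 : (0:ℝ) < s := lt_of_lt_of_le one_pos hs
  have hc' : (s - 1) * (a12' u2 * a21' u1) ≤ s * (a11' u1 * a22' u2) := by
    have h := hcross u2 u1 hu2.le hu1.le
    have := mul_le_mul_of_nonneg_left h hs0.le
    calc (s - 1) * (a12' u2 * a21' u1)
        = s * ((1 - 1 / s) * a12' u2 * a21' u1) := by field_simp
      _ ≤ s * (a11' u1 * a22' u2) := by
          exact mul_le_mul_of_nonneg_left h hs0.le
  have main : ∀ z1 z2 : ℝ,
      ((α10 + a11 u1) / u1) * a21' u1 * z1 ^ 2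
        + ((α20 + a22 u2) / u2) * a12' u2 * z2 ^ 2
      ≤ ![z1, z2] ⬝ᵥ
          ((!![a21' u1 / u1, 0; 0, a12' u2 / u2] *
            !![(α10 + a11 u1 + a12 u2) + u1 * a11' u1, u1 * a12' u2;
               u2 * a21' u1, (α20 + a21 u1 + a22 u2) + u2 * a22' u2]) *ᵥ
            ![z1, z2]) := by
    intro z1 z2
    have hN := numer s u1 u2 (a12 u2) (a21 u1) (a12' u2) (a21' u1) (a11' u1) (a22' u2)
      z1 z2 hs hu1 hu2 (hnn11' u1 hu1.le) (hnn22' u2 hu2.le)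
      (hnn12' u2 hu2.le) (hnn21' u1 hu1.le) (hs12 u2 hu2.le) (hs21 u1 hu1.le) hc'
    have hexp : ![z1, z2] ⬝ᵥ
        ((!![a21' u1 / u1, 0; 0, a12' u2 / u2] *
          !![(α10 + a11 u1 + a12 u2) + u1 * a11' u1, u1 * a12' u2;
             u2 * a21' u1, (α20 + a21 u1 + a22 u2) + u2 * a22' u2]) *ᵥ
          ![z1, z2])
        = ((α10 + a11 u1) / u1) * a21' u1 * z1 ^ 2
          + ((α20 + a22 u2) / u2) * a12' u2 * z2 ^ 2
          + (a21' u1 * u2 * a12 u2 * z1 ^ 2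
             + a11' u1 * a21' u1 * u1 * u2 * z1 ^ 2
             + 2 * a12' u2 * a21' u1 * u1 * u2 * z1 * z2
             + a12' u2 * u1 * a21 u1 * z2 ^ 2
             + a22' u2 * a12' u2 * u1 * u2 * z2 ^ 2) / (u1 * u2) := by
      simp [Matrix.mul_apply, Matrix.mulVec, dotProduct, Fin.sum_univ_succ]
      field_simp
      ring
    rw [hexp]
    have : 0 ≤ (a21' u1 * u2 * a12 u2 * z1 ^ 2
             + a11' u1 * a21' u1 * u1 * u2 * z1 ^ 2
             + 2 * a12' u2 * a21' u1 * u1 * u2 * z1 * z2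
             + a12' u2 * u1 * a21 u1 * z2 ^ 2
             + a22' u2 * a12' u2 * u1 * u2 * z2 ^ 2) / (u1 * u2) := by
      apply div_nonneg _ (mul_nonneg hu1.le hu2.le)
      nlinarith [hN]
    linarith
  refine ⟨main, fun z => ?_⟩
  have hz : z = ![z 0, z 1] := by
    ext i; fin_cases i <;> simp
  have h1 := main (z 0) (z 1)
  have hL1 : 0 ≤ ((α10 + a11 u1) / u1) * a21' u1 * (z 0) ^ 2 :=
    mul_nonneg (mul_nonneg (div_nonneg (by nlinarith [hnn11 u1 hu1.le]) hu1.le)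
      (hnn21' u1 hu1.le)) (sq_nonneg _)
  have hL2 : 0 ≤ ((α20 + a22 u2) / u2) * a12' u2 * (z 1) ^ 2 :=
    mul_nonneg (mul_nonneg (div_nonneg (by nlinarith [hnn22 u2 hu2.le]) hu2.le)
      (hnn12' u2 hu2.le)) (sq_nonneg _)
  rw [hz]
  linarith
end

section
/- Let s ≥ 1 and let p_i(u) = α_{i0} + α_{i1} u1^s + α_{i2} u2^s for i = 1, 2 with all α_{ij} > 0 satisfying α11·α22 ≥ (1 − 1/s)·α12·α21. Let A(u) = ((p1 + u1 ∂1 p1, u1 ∂2 p1), (u2 ∂1 p2, p2 + u2 ∂2 p2)) and H(u) = diag(s α21 u1^{s−2}, s α12 u2^{s−2}). Then for all u ∈ (0,∞)² and z ∈ ℝ²: zᵀ H(u) A(u) z ≥ (α10 + α11 u1^s)/u1 · s α21 u1^{s−1} · z1² + (α20 + α22 u2^s)/u2 · s α12 u2^{s−1} · z2² > 0 for z ≠ 0; in particular H(u)A(u) is positive definite on (0,∞)². -/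
/-!
Write `X = u1 ^ s`, `Y = u2 ^ s`. The form `zᵀ H A z` minus the diagonal lower bound is a binary
quadratic form `a z1² + 2 c z1 z2 + b z2²` with `a > 0`, and after cancelling common positive
factors the discriminant condition `c² ≤ a b` reads
`s² α12 α21 X Y ≤ (α12 Y + s α11 X)(α21 X + s α22 Y)`.
Using `(s - 1) α12 α21 ≤ s α11 α22` this reduces to
`(s - 1) α12 α21 X Y ≤ s α11 α21 X² + s α12 α22 Y²`, an AM–GM type estimate.
Since the lower bound is positive definite, so is `H A`.
-/

open Matrix Real

theorem Matrix.vec2_dotProduct_mulVec_vec2 {R : Type*} [CommRing R] (M : Matrix (Fin 2) (Fin 2) R)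
    (x y : R) :
    ![x, y] ⬝ᵥ (M *ᵥ ![x, y]) = M 0 0 * x ^ 2 + (M 0 1 + M 1 0) * (x * y) + M 1 1 * y ^ 2 := by
  simp only [vec2_dotProduct, mulVec_fin_two, cons_val_zero, cons_val_one]
  ring

theorem quadratic_nonneg_of_sq_le_mul {a b c : ℝ} (ha : 0 < a) (h : c ^ 2 ≤ a * b) (x y : ℝ) :
    0 ≤ a * x ^ 2 + 2 * c * (x * y) + b * y ^ 2 := by
  nlinarith [sq_nonneg (a * x + c * y), mul_nonneg (sub_nonneg.2 h) (sq_nonneg y)]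

theorem Real.rpow_sub_one_eq_rpow_sub_two_mul {x : ℝ} (hx : 0 < x) (s : ℝ) :
    x ^ (s - 1) = x ^ (s - 2) * x := by
  rw [show s - 2 = s - 1 - 1 by ring, rpow_sub_one hx.ne' (s - 1), div_mul_cancel₀ _ hx.ne']

theorem Real.rpow_eq_rpow_sub_two_mul_sq {x : ℝ} (hx : 0 < x) (s : ℝ) :
    x ^ s = x ^ (s - 2) * x ^ 2 := by
  rw [rpow_sub hx, rpow_two, div_mul_cancel₀ _ (by positivity)]

section CrossDiffusion

variable {s α11 α12 α21 α22 : ℝ}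

theorem cross_mul_le_of_cross_condition (hs : 1 ≤ s) (h11 : 0 < α11) (h12 : 0 < α12)
    (h21 : 0 < α21) (hcross : (s - 1) * (α12 * α21) ≤ s * (α11 * α22))
    {X Y : ℝ} (hX : 0 ≤ X) (hY : 0 ≤ Y) :
    (s - 1) * (α12 * α21) * (X * Y) ≤ s * (α11 * α21) * X ^ 2 + s * (α12 * α22) * Y ^ 2 := by
  -- After multiplying by `s α11 α21`, the claim is `(s - 1) a b ≤ a² + s (s - 1) b²`,
  -- which follows from `2 a b ≤ a² + b²` since `s - 1 ≤ s`.
  set a := s * (α11 * α21) * X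
  set b := α12 * α21 * Y
  have hab : 0 ≤ a * b := by positivity
  have hs1 : 0 ≤ s - 1 := by linarith
  have hcrossY : s * (s - 1) * b ^ 2 ≤ s * (α12 * α21) * (s * (α11 * α22)) * Y ^ 2 := by
    have := mul_le_mul_of_nonneg_left hcross (by positivity : 0 ≤ s * (α12 * α21) * Y ^ 2)
    linear_combination this
  have key : (s - 1) * (a * b) ≤ a ^ 2 + s * (s - 1) * b ^ 2 := by
    nlinarith [sq_nonneg (a - (s - 1) * b), mul_nonneg hs1 hab, mul_nonneg hs1 (sq_nonneg b)]
  have hpos : 0 < s * (α11 * α21) := by positivity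
  refine le_of_mul_le_mul_left ?_ hpos
  linear_combination key + hcrossY

theorem sq_mul_le_mul_of_cross_condition (hs : 1 ≤ s) (h11 : 0 < α11) (h12 : 0 < α12)
    (h21 : 0 < α21) (hcross : (s - 1) * (α12 * α21) ≤ s * (α11 * α22))
    {X Y : ℝ} (hX : 0 ≤ X) (hY : 0 ≤ Y) :
    s ^ 2 * (α12 * α21) * (X * Y) ≤ (α12 * Y + s * α11 * X) * (α21 * X + s * α22 * Y) := by
  have hsXY : 0 ≤ s * (X * Y) := mul_nonneg (by linarith) (mul_nonneg hX hY)
  linear_combination cross_mul_le_of_cross_condition hs h11 h12 h21 hcross hX hY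
    + mul_le_mul_of_nonneg_left hcross hsXY

theorem quadratic_form_sub_lower_bound_nonneg (hs : 1 ≤ s) (h11 : 0 < α11) (h12 : 0 < α12)
    (h21 : 0 < α21) (hcross : (s - 1) * (α12 * α21) ≤ s * (α11 * α22))
    {c1 c2 u1 u2 : ℝ} (hc1 : 0 < c1) (hc2 : 0 < c2) (hu1 : u1 ≠ 0) (z1 z2 : ℝ) :
    0 ≤ s * α21 * c1 * (α12 * (c2 * u2 ^ 2) + s * α11 * (c1 * u1 ^ 2)) * z1 ^ 2
      + 2 * (s ^ 2 * (α12 * α21) * (c1 * c2) * (u1 * u2)) * (z1 * z2)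
      + s * α12 * c2 * (α21 * (c1 * u1 ^ 2) + s * α22 * (c2 * u2 ^ 2)) * z2 ^ 2 := by
  have hs0 : 0 < s := by linarith
  refine quadratic_nonneg_of_sq_le_mul (by positivity) ?_ z1 z2
  have hXY := sq_mul_le_mul_of_cross_condition hs h11 h12 h21 hcross
    (by positivity : 0 ≤ c1 * u1 ^ 2) (by positivity : 0 ≤ c2 * u2 ^ 2)
  have := mul_le_mul_of_nonneg_left hXY (by positivity : 0 ≤ s ^ 2 * (α12 * α21) * (c1 * c2))
  linear_combination this

end CrossDiffusion

theorem add_mul_sq_pos_of_vec2_ne_zero {a b x y : ℝ} (ha : 0 < a) (hb : 0 < b) (h : ![x, y] ≠ 0) :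
    0 < a * x ^ 2 + b * y ^ 2 := by
  have hxy : x ≠ 0 ∨ y ≠ 0 := by
    by_contra! h0
    exact h (by simp [h0.1, h0.2])
  rcases hxy with hx | hy <;> positivity

/-- Positive definiteness of `H(u) A(u)` for the power-law population model
`p_i(u) = α_{i0} + α_{i1} u1^s + α_{i2} u2^s` with `α11 α22 ≥ (1 − 1/s) α12 α21`. -/
theorem stmt15 (s : ℝ) (hs : 1 ≤ s)
    (α10 α20 α11 α12 α21 α22 : ℝ)
    (h10 : 0 < α10) (h20 : 0 < α20) (h11 : 0 < α11) (h12 : 0 < α12)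
    (h21 : 0 < α21) (h22 : 0 < α22)
    (hcross : (1 - 1 / s) * α12 * α21 ≤ α11 * α22)
    (u1 u2 : ℝ) (hu1 : 0 < u1) (hu2 : 0 < u2)
    (H A : Matrix (Fin 2) (Fin 2) ℝ)
    (hH : H = !![s * α21 * u1 ^ (s - 2), 0; 0, s * α12 * u2 ^ (s - 2)])
    (hA : A = !![(α10 + α11 * u1 ^ s + α12 * u2 ^ s) + u1 * (s * α11 * u1 ^ (s - 1)),
                 u1 * (s * α12 * u2 ^ (s - 1));
                 u2 * (s * α21 * u1 ^ (s - 1)),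
                 (α20 + α21 * u1 ^ s + α22 * u2 ^ s) + u2 * (s * α22 * u2 ^ (s - 1))]) :
    (∀ z1 z2 : ℝ,
      ((α10 + α11 * u1 ^ s) / u1) * (s * α21 * u1 ^ (s - 1)) * z1 ^ 2
        + ((α20 + α22 * u2 ^ s) / u2) * (s * α12 * u2 ^ (s - 1)) * z2 ^ 2
      ≤ ![z1, z2] ⬝ᵥ ((H * A) *ᵥ ![z1, z2])) ∧
    ∀ z : Fin 2 → ℝ, z ≠ 0 → 0 < z ⬝ᵥ ((H * A) *ᵥ z) := by
  have hs0 : 0 < s := by linarith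
  have hcross' : (s - 1) * (α12 * α21) ≤ s * (α11 * α22) := by
    calc (s - 1) * (α12 * α21) = s * ((1 - 1 / s) * α12 * α21) := by field_simp
      _ ≤ s * (α11 * α22) := by gcongr
  have lower : ∀ z1 z2 : ℝ,
      ((α10 + α11 * u1 ^ s) / u1) * (s * α21 * u1 ^ (s - 1)) * z1 ^ 2
        + ((α20 + α22 * u2 ^ s) / u2) * (s * α12 * u2 ^ (s - 1)) * z2 ^ 2
      ≤ ![z1, z2] ⬝ᵥ ((H * A) *ᵥ ![z1, z2]) := by
    intro z1 z2
    rw [hH, hA, vec2_dotProduct_mulVec_vec2, mul_fin_two]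
    simp only [of_apply, cons_val', cons_val_zero, cons_val_one, empty_val', cons_val_fin_one]
    rw [rpow_sub_one_eq_rpow_sub_two_mul hu1, rpow_sub_one_eq_rpow_sub_two_mul hu2,
      rpow_eq_rpow_sub_two_mul_sq hu1, rpow_eq_rpow_sub_two_mul_sq hu2]
    have := quadratic_form_sub_lower_bound_nonneg (u2 := u2) hs h11 h12 h21 hcross'
      (rpow_pos_of_pos hu1 (s - 2)) (rpow_pos_of_pos hu2 (s - 2)) hu1.ne' z1 z2
    field_simp
    linear_combination this
  refine ⟨lower, fun z hz => ?_⟩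
  obtain ⟨z1, z2, rfl⟩ : ∃ z1 z2, z = ![z1, z2] := ⟨z 0, z 1, by ext i; fin_cases i <;> rfl⟩
  exact (add_mul_sq_pos_of_vec2_ne_zero (by positivity) (by positivity) hz).trans_le (lower z1 z2)
end

section
/- Under the hypotheses of the previous lemma and additionally 4·a21(w) ≥ w·a21'(w) ≥ 0 and 4·a12(v) ≥ v·a12'(v) ≥ 0 for all v, w ≥ 0, define for ε > 0 the regularized matrices A_ε(u) = A(u) + ε·diag(u2, u1) and H_ε(u) = H(u) + ε·diag(1/u1, 1/u2). Then for all u ∈ (0,∞)² and z ∈ ℝ²: zᵀ H_ε(u) A_ε(u) z ≥ zᵀ H(u) A(u) z + ε·(((α10 + a11(u1))/u1)·z1² + ((α20 + a22(u2))/u2)·z2²). In particular H_ε(u)A_ε(u) is positive definite on (0,∞)². -/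
/-!
With `H` and `A` as in the statement, `H A` is symmetric with off-diagonal entry `a12'(u2) a21'(u1)`,
and its positive semidefiniteness reduces, via the bounds `s a12 ≥ v a12'` and `s a21 ≥ w a21'`,
to `xy ≤ (x/s + m)(y/s + n)` for `x = u2 a12'(u2)`, `y = u1 a21'(u1)`, `m = u1 a11'(u1)`,
`n = u2 a22'(u2)`; under `(1 - 1/s) xy ≤ mn` this follows from `xn + my ≥ 2 √(xymn)`.
Expanding `(H + ε D₁)(A + ε D₂)` produces `H A`, the diagonal `ε`-term of the claim (positive
for `z ≠ 0` since `α10, α20 > 0`), and `ε` times a further quadratic form whose discriminant is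
controlled by the bounds `4 a12 ≥ v a12'` and `4 a21 ≥ w a21'`.
-/

open Matrix

theorem quadratic_nonneg_of_sq_le_mul_s16 {X Y P : ℝ} (hX : 0 ≤ X) (hY : 0 ≤ Y) (hP : P ^ 2 ≤ X * Y)
    (z1 z2 : ℝ) : 0 ≤ X * z1 ^ 2 + 2 * P * (z1 * z2) + Y * z2 ^ 2 := by
  rcases hX.eq_or_lt with rfl | hX
  · obtain rfl : P = 0 := by nlinarith
    simpa using mul_nonneg hY (sq_nonneg z2)
  · have : 0 ≤ X * (X * z1 ^ 2 + 2 * P * (z1 * z2) + Y * z2 ^ 2) := by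
      nlinarith [sq_nonneg (X * z1 + P * z2), mul_nonneg (sub_nonneg.2 hP) (sq_nonneg z2)]
    exact nonneg_of_mul_nonneg_right this hX

theorem mul_le_add_mul_add_of_one_sub_mul_le {t x y m n : ℝ} (ht0 : 0 ≤ t) (ht1 : t ≤ 1)
    (hx : 0 ≤ x) (hy : 0 ≤ y) (hm : 0 ≤ m) (hn : 0 ≤ n) (h : (1 - t) * (x * y) ≤ m * n) :
    x * y ≤ (t * x + m) * (t * y + n) := by
  have hxy : 0 ≤ x * y := mul_nonneg hx hy
  have hmixed : 2 * (1 - t) * (x * y) ≤ x * n + m * y := by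
    refine (pow_le_pow_iff_left₀ (by nlinarith) (by positivity) two_ne_zero).1 ?_
    nlinarith [sq_nonneg (x * n - m * y), mul_le_mul_of_nonneg_left h hxy]
  nlinarith [mul_le_mul_of_nonneg_left hmixed ht0,
    mul_nonneg (mul_nonneg ht0 (sub_nonneg.2 ht1)) hxy]

theorem add_mul_sq_pos_of_ne_zero {a b z1 z2 : ℝ} (ha : 0 < a) (hb : 0 < b) (hz : ![z1, z2] ≠ 0) :
    0 < a * z1 ^ 2 + b * z2 ^ 2 := by
  have hne : z1 ≠ 0 ∨ z2 ≠ 0 := by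
    by_contra! h
    exact hz (by rw [h.1, h.2]; ext i; fin_cases i <;> rfl)
  rcases hne with h | h
  · exact add_pos_of_pos_of_nonneg (by positivity) (by positivity)
  · exact add_pos_of_nonneg_of_pos (by positivity) (by positivity)

section CrossDiffusion

variable {u1 u2 ε α10 α20 B11 B12 B21 B22 C11 C12 C21 C22 : ℝ}

theorem cross_mul_le_diag_mul {s : ℝ} (hs : 1 ≤ s) (hu1 : 0 ≤ u1) (hu2 : 0 ≤ u2)
    (h10 : 0 ≤ α10 + B11) (h20 : 0 ≤ α20 + B22)
    (hC11 : 0 ≤ C11) (hC12 : 0 ≤ C12) (hC21 : 0 ≤ C21) (hC22 : 0 ≤ C22)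
    (hs12 : u2 * C12 ≤ s * B12) (hs21 : u1 * C21 ≤ s * B21)
    (hcross : (1 - 1 / s) * C12 * C21 ≤ C11 * C22) :
    u1 * u2 * (C12 * C21)
      ≤ (α10 + B11 + B12 + u1 * C11) * (α20 + B21 + B22 + u2 * C22) := by
  have hs0 : 0 < s := zero_lt_one.trans_le hs
  have ht1 : 1 / s ≤ 1 := (div_le_one hs0).2 hs
  have hB12 : 1 / s * (u2 * C12) ≤ B12 := by
    rw [one_div_mul_eq_div, div_le_iff₀' hs0]; exact hs12
  have hB21 : 1 / s * (u1 * C21) ≤ B21 := by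
    rw [one_div_mul_eq_div, div_le_iff₀' hs0]; exact hs21
  have hscalar := mul_le_add_mul_add_of_one_sub_mul_le (by positivity) ht1
    (mul_nonneg hu2 hC12) (mul_nonneg hu1 hC21) (mul_nonneg hu1 hC11) (mul_nonneg hu2 hC22)
    (show (1 - 1 / s) * (u2 * C12 * (u1 * C21)) ≤ u1 * C11 * (u2 * C22) by
      nlinarith [mul_le_mul_of_nonneg_left hcross (mul_nonneg hu1 hu2)])
  calc u1 * u2 * (C12 * C21) = u2 * C12 * (u1 * C21) := by ring
    _ ≤ _ := hscalar
    _ ≤ _ := by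
      have := mul_nonneg hu1 hC11
      have := mul_nonneg hu2 hC22
      have := mul_nonneg (one_div_nonneg.2 hs0.le) (mul_nonneg hu2 hC12)
      have := mul_nonneg (one_div_nonneg.2 hs0.le) (mul_nonneg hu1 hC21)
      gcongr (?_ + _) * (?_ + _) <;> linarith

theorem entropy_form_nonneg {S1 S2 : ℝ} (hu1 : 0 < u1) (hu2 : 0 < u2)
    (hC12 : 0 ≤ C12) (hC21 : 0 ≤ C21) (hS1 : 0 ≤ S1) (hS2 : 0 ≤ S2)
    (h : u1 * u2 * (C12 * C21) ≤ S1 * S2) (z1 z2 : ℝ) :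
    0 ≤ C21 / u1 * S1 * z1 ^ 2 + 2 * (C12 * C21) * (z1 * z2) + C12 / u2 * S2 * z2 ^ 2 := by
  refine quadratic_nonneg_of_sq_le_mul_s16 (by positivity) (by positivity) ?_ z1 z2
  rw [show C21 / u1 * S1 * (C12 / u2 * S2) = C12 * C21 * (S1 * S2) / (u1 * u2) by
    field_simp, le_div_iff₀ (by positivity)]
  nlinarith [mul_le_mul_of_nonneg_left h (mul_nonneg hC12 hC21)]

theorem regularization_form_nonneg (hu1 : 0 < u1) (hu2 : 0 < u2) (hε : 0 ≤ ε)
    (hC11 : 0 ≤ C11) (hC12 : 0 ≤ C12) (hC21 : 0 ≤ C21) (hC22 : 0 ≤ C22)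
    (h12 : u2 * C12 ≤ 4 * B12) (h21 : u1 * C21 ≤ 4 * B21) (z1 z2 : ℝ) :
    0 ≤ (B12 + u1 * C11 + u2 * C21 + ε * u2) / u1 * z1 ^ 2 + (C12 + C21) * (z1 * z2)
      + (B21 + u2 * C22 + u1 * C12 + ε * u1) / u2 * z2 ^ 2 := by
  set X := (B12 + u1 * C11 + u2 * C21 + ε * u2) / u1
  set Y := (B21 + u2 * C22 + u1 * C12 + ε * u1) / u2
  have hX : u2 * (C21 + C12 / 4) ≤ u1 * X := by
    rw [mul_div_cancel₀ _ hu1.ne']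
    nlinarith [mul_nonneg hu1.le hC11, mul_nonneg hε hu2.le]
  have hY : u1 * (C12 + C21 / 4) ≤ u2 * Y := by
    rw [mul_div_cancel₀ _ hu2.ne']
    nlinarith [mul_nonneg hu2.le hC22, mul_nonneg hε hu1.le]
  have ha : 0 ≤ C21 + C12 / 4 := by positivity
  have hb : 0 ≤ C12 + C21 / 4 := by positivity
  have hX0 : 0 ≤ X := nonneg_of_mul_nonneg_right (by nlinarith [mul_nonneg hu2.le ha]) hu1
  have hY0 : 0 ≤ Y := nonneg_of_mul_nonneg_right (by nlinarith [mul_nonneg hu1.le hb]) hu2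
  have hXY : (C21 + C12 / 4) * (C12 + C21 / 4) ≤ X * Y := by
    refine le_of_mul_le_mul_left ?_ (mul_pos hu1 hu2)
    calc u1 * u2 * ((C21 + C12 / 4) * (C12 + C21 / 4))
        = u2 * (C21 + C12 / 4) * (u1 * (C12 + C21 / 4)) := by ring
      _ ≤ u1 * X * (u2 * Y) := mul_le_mul hX hY (by positivity) (by positivity)
      _ = u1 * u2 * (X * Y) := by ring
  have := quadratic_nonneg_of_sq_le_mul_s16 (P := (C12 + C21) / 2) hX0 hY0
    (by nlinarith [mul_nonneg hC12 hC21]) z1 z2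
  linarith

theorem dotProduct_entropy_mul_diffusion_mulVec {S1 S2 : ℝ} (hu1 : u1 ≠ 0) (hu2 : u2 ≠ 0)
    (z1 z2 : ℝ) :
    ![z1, z2] ⬝ᵥ ((!![C21 / u1, 0; 0, C12 / u2] *
        !![S1 + u1 * C11, u1 * C12; u2 * C21, S2 + u2 * C22]) *ᵥ ![z1, z2])
      = C21 / u1 * (S1 + u1 * C11) * z1 ^ 2 + 2 * (C12 * C21) * (z1 * z2)
        + C12 / u2 * (S2 + u2 * C22) * z2 ^ 2 := by
  simp only [dotProduct, mulVec, mul_apply, of_apply, cons_val', cons_val_zero, cons_val_one,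
    cons_val_fin_one, Fin.sum_univ_two]
  field_simp
  ring

theorem dotProduct_regularized_mulVec (hu1 : u1 ≠ 0) (hu2 : u2 ≠ 0) (z1 z2 : ℝ) :
    ![z1, z2] ⬝ᵥ (((!![C21 / u1, 0; 0, C12 / u2] + ε • !![1 / u1, 0; 0, 1 / u2]) *
        (!![α10 + B11 + B12 + u1 * C11, u1 * C12; u2 * C21, α20 + B21 + B22 + u2 * C22]
          + ε • !![u2, 0; 0, u1])) *ᵥ ![z1, z2])
      = ![z1, z2] ⬝ᵥ ((!![C21 / u1, 0; 0, C12 / u2] *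
          !![α10 + B11 + B12 + u1 * C11, u1 * C12; u2 * C21, α20 + B21 + B22 + u2 * C22]) *ᵥ
            ![z1, z2])
        + ε * ((α10 + B11) / u1 * z1 ^ 2 + (α20 + B22) / u2 * z2 ^ 2)
        + ε * ((B12 + u1 * C11 + u2 * C21 + ε * u2) / u1 * z1 ^ 2 + (C12 + C21) * (z1 * z2)
          + (B21 + u2 * C22 + u1 * C12 + ε * u1) / u2 * z2 ^ 2) := by
  simp only [dotProduct, mulVec, mul_apply, Matrix.add_apply, Matrix.smul_apply, smul_eq_mul,
    of_apply, cons_val', cons_val_zero, cons_val_one, cons_val_fin_one, Fin.sum_univ_two]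
  field_simp
  ring

end CrossDiffusion

theorem stmt16_general (s : ℝ) (hs : 1 ≤ s)
    (α10 α20 : ℝ) (h10 : 0 < α10) (h20 : 0 < α20)
    (a11 a12 a21 a22 a11' a12' a21' a22' : ℝ → ℝ)
    (hnn11 : ∀ y : ℝ, 0 ≤ y → 0 ≤ a11 y) (hnn22 : ∀ y : ℝ, 0 ≤ y → 0 ≤ a22 y)
    (hnn12 : ∀ y : ℝ, 0 ≤ y → 0 ≤ a12 y) (hnn21 : ∀ y : ℝ, 0 ≤ y → 0 ≤ a21 y)
    (hnn11' : ∀ y : ℝ, 0 ≤ y → 0 ≤ a11' y) (hnn22' : ∀ y : ℝ, 0 ≤ y → 0 ≤ a22' y)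
    (hnn12' : ∀ y : ℝ, 0 ≤ y → 0 ≤ a12' y) (hnn21' : ∀ y : ℝ, 0 ≤ y → 0 ≤ a21' y)
    (hs12 : ∀ v : ℝ, 0 ≤ v → v * a12' v ≤ s * a12 v)
    (hs21 : ∀ w : ℝ, 0 ≤ w → w * a21' w ≤ s * a21 w)
    (hcross : ∀ v w : ℝ, 0 ≤ v → 0 ≤ w →
      (1 - 1 / s) * a12' v * a21' w ≤ a11' w * a22' v)
    (h4a21 : ∀ w : ℝ, 0 ≤ w → w * a21' w ≤ 4 * a21 w)
    (h4a12 : ∀ v : ℝ, 0 ≤ v → v * a12' v ≤ 4 * a12 v)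
    (ε : ℝ) (hε : 0 < ε) :
    ∀ u1 u2 : ℝ, 0 < u1 → 0 < u2 →
      (∀ z1 z2 : ℝ,
        ![z1, z2] ⬝ᵥ
            ((!![a21' u1 / u1, 0; 0, a12' u2 / u2] *
              !![(α10 + a11 u1 + a12 u2) + u1 * a11' u1, u1 * a12' u2;
                 u2 * a21' u1, (α20 + a21 u1 + a22 u2) + u2 * a22' u2]) *ᵥ
              ![z1, z2])
          + ε * (((α10 + a11 u1) / u1) * z1 ^ 2 + ((α20 + a22 u2) / u2) * z2 ^ 2)
        ≤ ![z1, z2] ⬝ᵥ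
            (((!![a21' u1 / u1, 0; 0, a12' u2 / u2] + ε • !![1 / u1, 0; 0, 1 / u2]) *
              (!![(α10 + a11 u1 + a12 u2) + u1 * a11' u1, u1 * a12' u2;
                  u2 * a21' u1, (α20 + a21 u1 + a22 u2) + u2 * a22' u2]
                + ε • !![u2, 0; 0, u1])) *ᵥ
              ![z1, z2])) ∧
      ∀ z : Fin 2 → ℝ, z ≠ 0 →
        0 < z ⬝ᵥ
          (((!![a21' u1 / u1, 0; 0, a12' u2 / u2] + ε • !![1 / u1, 0; 0, 1 / u2]) *
            (!![(α10 + a11 u1 + a12 u2) + u1 * a11' u1, u1 * a12' u2;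
                u2 * a21' u1, (α20 + a21 u1 + a22 u2) + u2 * a22' u2]
              + ε • !![u2, 0; 0, u1])) *ᵥ z) := by
  intro u1 u2 hu1 hu2
  have hB11 := hnn11 u1 hu1.le
  have hB12 := hnn12 u2 hu2.le
  have hB21 := hnn21 u1 hu1.le
  have hB22 := hnn22 u2 hu2.le
  have hC11 := hnn11' u1 hu1.le
  have hC12 := hnn12' u2 hu2.le
  have hC21 := hnn21' u1 hu1.le
  have hC22 := hnn22' u2 hu2.le
  have hR := regularization_form_nonneg hu1 hu2 hε.le hC11 hC12 hC21 hC22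
    (h4a12 u2 hu2.le) (h4a21 u1 hu1.le)
  refine ⟨fun z1 z2 => ?_, fun z hz => ?_⟩
  · rw [dotProduct_regularized_mulVec hu1.ne' hu2.ne']
    linarith [mul_nonneg hε.le (hR z1 z2)]
  · have hz2 : z = ![z 0, z 1] := by ext i; fin_cases i <;> rfl
    have hdiag := add_mul_sq_pos_of_ne_zero (div_pos (add_pos_of_pos_of_nonneg h10 hB11) hu1)
      (div_pos (add_pos_of_pos_of_nonneg h20 hB22) hu2) (hz2 ▸ hz)
    have hHA := entropy_form_nonneg (S1 := α10 + a11 u1 + a12 u2 + u1 * a11' u1)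
      (S2 := α20 + a21 u1 + a22 u2 + u2 * a22' u2) hu1 hu2 hC12 hC21
      (by linarith [mul_nonneg hu1.le hC11]) (by linarith [mul_nonneg hu2.le hC22])
      (cross_mul_le_diag_mul hs hu1.le hu2.le (by linarith) (by linarith)
        hC11 hC12 hC21 hC22 (hs12 u2 hu2.le) (hs21 u1 hu1.le) (hcross u2 u1 hu2.le hu1.le))
      (z 0) (z 1)
    rw [hz2, dotProduct_regularized_mulVec hu1.ne' hu2.ne',
      dotProduct_entropy_mul_diffusion_mulVec hu1.ne' hu2.ne']
    linarith [mul_nonneg hε.le (hR (z 0) (z 1)), mul_pos hε hdiag]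

/-- Positive definiteness of the regularized product `H_ε(u) A_ε(u)` for the
population model without volume filling. -/
theorem stmt16 (s : ℝ) (hs : 1 ≤ s)
    (α10 α20 : ℝ) (h10 : 0 < α10) (h20 : 0 < α20)
    (a11 a12 a21 a22 a11' a12' a21' a22' : ℝ → ℝ)
    (hd11 : ∀ y : ℝ, 0 ≤ y → HasDerivAt a11 (a11' y) y)
    (hd12 : ∀ y : ℝ, 0 ≤ y → HasDerivAt a12 (a12' y) y)
    (hd21 : ∀ y : ℝ, 0 ≤ y → HasDerivAt a21 (a21' y) y)
    (hd22 : ∀ y : ℝ, 0 ≤ y → HasDerivAt a22 (a22' y) y)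
    (hnn11 : ∀ y : ℝ, 0 ≤ y → 0 ≤ a11 y) (hnn22 : ∀ y : ℝ, 0 ≤ y → 0 ≤ a22 y)
    (hnn12 : ∀ y : ℝ, 0 ≤ y → 0 ≤ a12 y) (hnn21 : ∀ y : ℝ, 0 ≤ y → 0 ≤ a21 y)
    (hnn11' : ∀ y : ℝ, 0 ≤ y → 0 ≤ a11' y) (hnn22' : ∀ y : ℝ, 0 ≤ y → 0 ≤ a22' y)
    (hnn12' : ∀ y : ℝ, 0 ≤ y → 0 ≤ a12' y) (hnn21' : ∀ y : ℝ, 0 ≤ y → 0 ≤ a21' y)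
    (hs12 : ∀ v : ℝ, 0 ≤ v → v * a12' v ≤ s * a12 v)
    (hs21 : ∀ w : ℝ, 0 ≤ w → w * a21' w ≤ s * a21 w)
    (hcross : ∀ v w : ℝ, 0 ≤ v → 0 ≤ w →
      (1 - 1 / s) * a12' v * a21' w ≤ a11' w * a22' v)
    (h4a21 : ∀ w : ℝ, 0 ≤ w → w * a21' w ≤ 4 * a21 w)
    (h4a21' : ∀ w : ℝ, 0 ≤ w → 0 ≤ w * a21' w)
    (h4a12 : ∀ v : ℝ, 0 ≤ v → v * a12' v ≤ 4 * a12 v)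
    (h4a12' : ∀ v : ℝ, 0 ≤ v → 0 ≤ v * a12' v)
    (ε : ℝ) (hε : 0 < ε) :
    ∀ u1 u2 : ℝ, 0 < u1 → 0 < u2 →
      (∀ z1 z2 : ℝ,
        ![z1, z2] ⬝ᵥ
            ((!![a21' u1 / u1, 0; 0, a12' u2 / u2] *
              !![(α10 + a11 u1 + a12 u2) + u1 * a11' u1, u1 * a12' u2;
                 u2 * a21' u1, (α20 + a21 u1 + a22 u2) + u2 * a22' u2]) *ᵥ
              ![z1, z2])
          + ε * (((α10 + a11 u1) / u1) * z1 ^ 2 + ((α20 + a22 u2) / u2) * z2 ^ 2)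
        ≤ ![z1, z2] ⬝ᵥ
            (((!![a21' u1 / u1, 0; 0, a12' u2 / u2] + ε • !![1 / u1, 0; 0, 1 / u2]) *
              (!![(α10 + a11 u1 + a12 u2) + u1 * a11' u1, u1 * a12' u2;
                  u2 * a21' u1, (α20 + a21 u1 + a22 u2) + u2 * a22' u2]
                + ε • !![u2, 0; 0, u1])) *ᵥ
              ![z1, z2])) ∧
      ∀ z : Fin 2 → ℝ, z ≠ 0 →
        0 < z ⬝ᵥ
          (((!![a21' u1 / u1, 0; 0, a12' u2 / u2] + ε • !![1 / u1, 0; 0, 1 / u2]) *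
            (!![(α10 + a11 u1 + a12 u2) + u1 * a11' u1, u1 * a12' u2;
                u2 * a21' u1, (α20 + a21 u1 + a22 u2) + u2 * a22' u2]
              + ε • !![u2, 0; 0, u1])) *ᵥ z) :=
  stmt16_general s hs α10 α20 h10 h20 a11 a12 a21 a22 a11' a12' a21' a22' hnn11 hnn22 hnn12 hnn21
    hnn11' hnn22' hnn12' hnn21' hs12 hs21 hcross h4a21 h4a12 ε hε
end

section
/- Let u3 = 1 − u1 − u2 and δ(u) = u1 u2 (1 − u1 − u2)(2 + 4u1 + u2). For the Maxwell–Stefan example matrix A(u) = (1/(2 + 4u1 + u2))·((1 + 2u1, u1), (2u2, 2 + u2)) and the Hessian H(u) of the logarithmic entropy, the product H(u)A(u) equals (1/δ(u))·((u2(1−u1−u2) + 3u1u2, 3u1u2), (3u1u2, 2u1(1−u1−u2) + 3u1u2)) for all u ∈ D; in particular H(u)A(u) is symmetric, and it is positive definite on D. -/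
open Matrix

/-- Maxwell–Stefan illustrative example: `H(u) A(u)` equals the stated symmetric
matrix divided by `δ(u) = u1 u2 u3 (2+4u1+u2)`, and is symmetric positive definite
on the triangle `D`. -/
theorem stmt19 (u1 u2 : ℝ) (h1 : 0 < u1) (h2 : 0 < u2) (h3 : u1 + u2 < 1)
    (H A : Matrix (Fin 2) (Fin 2) ℝ)
    (hH : H = !![1 / u1 + 1 / (1 - u1 - u2), 1 / (1 - u1 - u2);
                 1 / (1 - u1 - u2), 1 / u2 + 1 / (1 - u1 - u2)])
    (hA : A = (1 / (2 + 4 * u1 + u2)) • !![1 + 2 * u1, u1; 2 * u2, 2 + u2]) :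
    H * A = (1 / (u1 * u2 * (1 - u1 - u2) * (2 + 4 * u1 + u2))) •
        !![u2 * (1 - u1 - u2) + 3 * u1 * u2, 3 * u1 * u2;
           3 * u1 * u2, 2 * u1 * (1 - u1 - u2) + 3 * u1 * u2] ∧
    (H * A).IsSymm ∧
    ∀ z : Fin 2 → ℝ, z ≠ 0 → 0 < z ⬝ᵥ ((H * A) *ᵥ z) := by
  have hu3 : 0 < 1 - u1 - u2 := by linarith
  have hd : 0 < 2 + 4 * u1 + u2 := by linarith
  have heq : H * A = (1 / (u1 * u2 * (1 - u1 - u2) * (2 + 4 * u1 + u2))) •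
        !![u2 * (1 - u1 - u2) + 3 * u1 * u2, 3 * u1 * u2;
           3 * u1 * u2, 2 * u1 * (1 - u1 - u2) + 3 * u1 * u2] := by
    subst hH hA
    ext i j
    fin_cases i <;> fin_cases j <;>
      simp [Matrix.mul_apply, Fin.sum_univ_two] <;>
      field_simp <;> ring
  refine ⟨heq, ?_, ?_⟩
  · rw [heq]
    rw [Matrix.IsSymm]
    ext i j
    fin_cases i <;> fin_cases j <;> simp [Matrix.transpose_apply]
  · intro z hz
    rw [heq]
    have hδ : 0 < u1 * u2 * (1 - u1 - u2) * (2 + 4 * u1 + u2) := by positivity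
    simp only [Matrix.smul_mulVec, dotProduct_smul, smul_eq_mul]
    have hz01 : z 0 ≠ 0 ∨ z 1 ≠ 0 := by
      by_contra h
      push_neg at h
      apply hz
      funext i; fin_cases i <;> simp [h.1, h.2]
    have hq : z ⬝ᵥ (!![u2 * (1 - u1 - u2) + 3 * u1 * u2, 3 * u1 * u2;
           3 * u1 * u2, 2 * u1 * (1 - u1 - u2) + 3 * u1 * u2] *ᵥ z)
        = (u2 * (1 - u1 - u2) + 3 * u1 * u2) * (z 0)^2
          + 6 * u1 * u2 * (z 0 * z 1)
          + (2 * u1 * (1 - u1 - u2) + 3 * u1 * u2) * (z 1)^2 := by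
      simp [Matrix.mulVec, dotProduct, Fin.sum_univ_two]
      ring
    rw [hq]
    have h0 : 0 < 1 / (u1 * u2 * (1 - u1 - u2) * (2 + 4 * u1 + u2)) := by positivity
    apply mul_pos h0
    rcases hz01 with h | h
    · nlinarith [sq_nonneg (z 0 + z 1), sq_nonneg (z 0 - z 1), sq_nonneg (z 1), pow_pos (abs_pos.mpr h) 2, sq_abs (z 0), sq_abs (z 1), mul_pos h1 h2, mul_pos h2 hu3, mul_pos h1 hu3]
    · nlinarith [sq_nonneg (z 0 + z 1), sq_nonneg (z 0 - z 1), sq_nonneg (z 0), pow_pos (abs_pos.mpr h) 2, sq_abs (z 0), sq_abs (z 1), mul_pos h1 h2, mul_pos h2 hu3, mul_pos h1 hu3]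
end
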